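/- arXiv:2306.07219 — 3 statements merged into one kernel-verified Lean document; each statement's English description precedes it below -/
import Mathlib

section
/- The mean of Y ~ PoiTG(λ, q, α) is E[Y] = λ + (q(1-α) + q²)/(1-q²). -/
open scoped BigOperators
open Real Filter

noncomputable def tgdPmf (q a : ℝ) (y : ℕ) : ℝ :=
  (1 - a) * q ^ y * (1 - q) + a * (1 - q ^ 2) * q ^ (2 * y)

noncomputable def poiTGPmf (lam q a : ℝ) (y : ℕ) : ℝ :=
  (1 - a) * (1 - q) * q ^ y * Real.exp (-lam) *
      ∑ i ∈ Finset.range (y + 1), (lam / q) ^ i / (Nat.factorial i : ℝ)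
  + a * (1 - q ^ 2) * q ^ (2 * y) * Real.exp (-lam) *
      ∑ i ∈ Finset.range (y + 1), (lam / q ^ 2) ^ i / (Nat.factorial i : ℝ)

/-!
`poiTGPmf lam q a` is the convolution of the Poisson weights `e^{-λ} λ^i / i!` with `tgdPmf q a`:
factoring `q^y` (resp. `q^{2y}`) out of the Poisson-geometric convolution leaves the finite sum
over `(λ/q)^i / i!`.  By the Cauchy product, the mean of the convolution of two summable real
weight sequences `f, g` is `(∑ n f n) (∑ g) + (∑ f) (∑ n g n)`, and `tgdPmf q a` is the mixture
`(1 - a) Geom(q) + a Geom(q²)`, whose mean is `(1 - a) q/(1 - q) + a q²/(1 - q²)`.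
-/

open Finset Nat

theorem hasSum_sum_antidiagonal_mul {f g : ℕ → ℝ} {a b : ℝ} (hf : HasSum f a) (hg : HasSum g b) :
    HasSum (fun n ↦ ∑ kl ∈ antidiagonal n, f kl.1 * g kl.2) (a * b) := by
  have hf' : Summable fun n ↦ ‖f n‖ := summable_norm_iff.mpr hf.summable
  have hg' : Summable fun n ↦ ‖g n‖ := summable_norm_iff.mpr hg.summable
  rw [← hf.tsum_eq, ← hg.tsum_eq, tsum_mul_tsum_eq_tsum_sum_antidiagonal_of_summable_norm hf' hg']
  exact (summable_sum_mul_antidiagonal_of_summable_norm' hf' hf.summable hg' hg.summable).hasSum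

theorem hasSum_coe_mul_sum_antidiagonal_mul {f g : ℕ → ℝ} {a b ma mb : ℝ}
    (hf : HasSum f a) (hmf : HasSum (fun n ↦ n * f n) ma)
    (hg : HasSum g b) (hmg : HasSum (fun n ↦ n * g n) mb) :
    HasSum (fun n ↦ n * ∑ kl ∈ antidiagonal n, f kl.1 * g kl.2) (ma * b + a * mb) := by
  convert (hasSum_sum_antidiagonal_mul hmf hg).add (hasSum_sum_antidiagonal_mul hf hmg) using 1
  ext n
  rw [mul_sum, ← sum_add_distrib]
  refine sum_congr rfl fun kl hkl ↦ ?_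
  rw [← mem_antidiagonal.mp hkl]
  push_cast
  ring

section Geometric

variable {K : Type*} [NormedField K] {r : K}

theorem norm_sq_lt_one (hr : ‖r‖ < 1) : ‖r ^ 2‖ < 1 := by
  rw [norm_pow]
  exact pow_lt_one₀ (norm_nonneg r) hr two_ne_zero

theorem hasSum_one_sub_mul_pow (hr : ‖r‖ < 1) : HasSum (fun n : ℕ ↦ (1 - r) * r ^ n) 1 := by
  have hr1 : 1 - r ≠ 0 := sub_ne_zero.mpr fun h ↦ by simp [← h] at hr
  simpa [hr1] using (hasSum_geometric_of_norm_lt_one hr).mul_left (1 - r)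

theorem hasSum_coe_mul_one_sub_mul_pow (hr : ‖r‖ < 1) :
    HasSum (fun n : ℕ ↦ n * ((1 - r) * r ^ n)) (r / (1 - r)) := by
  have hr1 : 1 - r ≠ 0 := sub_ne_zero.mpr fun h ↦ by simp [← h] at hr
  have h := (hasSum_coe_mul_geometric_of_norm_lt_one hr).mul_left (1 - r)
  rw [pow_two, ← div_div, mul_div_cancel₀ _ hr1] at h
  simpa only [mul_left_comm] using h

end Geometric

/-- The Poisson weights, for a real parameter (Mathlib's `poissonPMFReal` takes `ℝ≥0`). -/
noncomputable def poissonWeight (lam : ℝ) (n : ℕ) : ℝ := exp (-lam) * (lam ^ n / n !)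

theorem hasSum_poissonWeight (lam : ℝ) : HasSum (poissonWeight lam) 1 := by
  have := (NormedSpace.expSeries_div_hasSum_exp lam).mul_left (exp (-lam))
  rwa [← Real.exp_eq_exp_ℝ, ← Real.exp_add, neg_add_cancel, Real.exp_zero] at this

theorem succ_mul_poissonWeight_succ (lam : ℝ) (n : ℕ) :
    ((n : ℝ) + 1) * poissonWeight lam (n + 1) = lam * poissonWeight lam n := by
  simp only [poissonWeight, factorial_succ, cast_mul, cast_succ, pow_succ]
  field_simp

theorem hasSum_coe_mul_poissonWeight (lam : ℝ) :
    HasSum (fun n ↦ n * poissonWeight lam n) lam := by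
  rw [← hasSum_nat_add_iff' 1]
  simpa [succ_mul_poissonWeight_succ] using (hasSum_poissonWeight lam).mul_left lam

theorem sum_antidiagonal_poissonWeight_mul_pow (lam : ℝ) {r : ℝ} (hr : r ≠ 0) (n : ℕ) :
    ∑ kl ∈ antidiagonal n, poissonWeight lam kl.1 * r ^ kl.2 =
      r ^ n * exp (-lam) * ∑ i ∈ range (n + 1), (lam / r) ^ i / i ! := by
  rw [Nat.sum_antidiagonal_eq_sum_range_succ (fun i j ↦ poissonWeight lam i * r ^ j), mul_sum]
  refine sum_congr rfl fun i hi ↦ ?_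
  have hrn : r ^ n = r ^ (n - i) * r ^ i := by
    rw [← pow_add, Nat.sub_add_cancel (Nat.lt_succ_iff.mp (mem_range.mp hi))]
  rw [poissonWeight, hrn, div_pow]
  field_simp

theorem tgdPmf_eq (q a : ℝ) (n : ℕ) :
    tgdPmf q a n = (1 - a) * ((1 - q) * q ^ n) + a * ((1 - q ^ 2) * (q ^ 2) ^ n) := by
  rw [tgdPmf, pow_mul]
  ring

theorem poiTGPmf_eq_sum_antidiagonal (lam a : ℝ) {q : ℝ} (hq : q ≠ 0) (n : ℕ) :
    poiTGPmf lam q a n = ∑ kl ∈ antidiagonal n, poissonWeight lam kl.1 * tgdPmf q a kl.2 := by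
  simp only [tgdPmf_eq, mul_add, sum_add_distrib, mul_left_comm (poissonWeight lam _), ← mul_sum,
    sum_antidiagonal_poissonWeight_mul_pow lam hq, sum_antidiagonal_poissonWeight_mul_pow lam
      (pow_ne_zero 2 hq), poiTGPmf, pow_mul]
  ring

theorem hasSum_tgdPmf (a : ℝ) {q : ℝ} (hq : ‖q‖ < 1) : HasSum (tgdPmf q a) 1 := by
  rw [funext (tgdPmf_eq q a)]
  simpa using ((hasSum_one_sub_mul_pow hq).mul_left (1 - a)).add
    ((hasSum_one_sub_mul_pow (norm_sq_lt_one hq)).mul_left a)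

theorem hasSum_coe_mul_tgdPmf (a : ℝ) {q : ℝ} (hq : ‖q‖ < 1) :
    HasSum (fun n ↦ n * tgdPmf q a n) ((1 - a) * (q / (1 - q)) + a * (q ^ 2 / (1 - q ^ 2))) := by
  simp only [tgdPmf_eq, mul_add, mul_left_comm (_ : ℝ) (1 - a), mul_left_comm (_ : ℝ) a]
  exact ((hasSum_coe_mul_one_sub_mul_pow hq).mul_left (1 - a)).add
    ((hasSum_coe_mul_one_sub_mul_pow (norm_sq_lt_one hq)).mul_left a)

theorem poiTG_mean_general (lam q a : ℝ) (hq0 : 0 < q) (hq1 : q < 1) :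
    (∑' y : ℕ, (y : ℝ) * poiTGPmf lam q a y) =
      lam + (q * (1 - a) + q ^ 2) / (1 - q ^ 2) := by
  have hq : ‖q‖ < 1 := by rwa [Real.norm_of_nonneg hq0.le]
  simp_rw [poiTGPmf_eq_sum_antidiagonal lam a hq0.ne']
  rw [(hasSum_coe_mul_sum_antidiagonal_mul (hasSum_poissonWeight lam)
    (hasSum_coe_mul_poissonWeight lam) (hasSum_tgdPmf a hq) (hasSum_coe_mul_tgdPmf a hq)).tsum_eq]
  have hq1' : 1 - q ≠ 0 := by linarith
  have hq2' : 1 - q ^ 2 ≠ 0 := by nlinarith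
  field_simp
  ring

theorem poiTG_mean (lam q a : ℝ) (hlam : 0 < lam) (hq0 : 0 < q) (hq1 : q < 1)
    (ha0 : 0 < a) (ha1 : a < 1) :
    (∑' y : ℕ, (y : ℝ) * poiTGPmf lam q a y) =
      lam + (q * (1 - a) + q ^ 2) / (1 - q ^ 2) :=
  poiTG_mean_general lam q a hq0 hq1
end

section
/- The variance of Y ~ TGD(q, α) is Var(Y) = q(1 - α + q(2 + q(1-α) - α²))/(1-q²)². -/
/-!
`tgdPmf q a` is the mixture `(1 - a) · Geom(q) + a · Geom(q²)` of two geometric laws on `ℕ`. The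
second moment of `Geom(r)` about any point `c` is `r(1 + r)/(1 - r)² - 2cr/(1 - r) + c²`, obtained
from the closed forms of `∑ rⁿ`, `∑ n rⁿ` and `∑ n² rⁿ`. Mixing these two moments at `c` equal to
the mean `(q(1 - a) + q²)/(1 - q²)` and clearing denominators gives the variance.
-/

open scoped BigOperators
open Real Filter

section GeometricMoments

variable {𝕜 : Type*} [NormedField 𝕜] {r : 𝕜}

theorem hasSum_sq_mul_geometric_of_norm_lt_one (hr : ‖r‖ < 1) :
    HasSum (fun n : ℕ ↦ (n : 𝕜) ^ 2 * r ^ n) (r * (1 + r) / (1 - r) ^ 3) := by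
  have hr1 : 1 - r ≠ 0 := sub_ne_zero.2 fun h ↦ by simp [← h] at hr
  -- `n ^ 2 = 2 * (n + 2).choose 2 - 3 * n - 2` reduces this to the sums of `(n + k).choose k * r ^ n`
  have hchoose (n : ℕ) : ((n + 2).choose 2 : 𝕜) * 2 = (n + 2) * (n + 1) := by
    have := Nat.add_one_mul_choose_eq (n + 1) 1
    rw [Nat.choose_one_right] at this
    linear_combination (norm := skip) congrArg (Nat.cast (R := 𝕜)) this.symm
    push_cast
    ring
  have hsum := (((hasSum_choose_mul_geometric_of_norm_lt_one 2 hr).mul_right 2).sub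
    ((hasSum_coe_mul_geometric_of_norm_lt_one hr).mul_left 3)).sub
    ((hasSum_geometric_of_norm_lt_one hr).mul_left 2)
  convert! hsum using 1
  · funext n
    linear_combination -r ^ n * hchoose n
  · field_simp
    ring

theorem hasSum_sq_sub_mul_geometric_pmf (hr : ‖r‖ < 1) (c : 𝕜) :
    HasSum (fun n : ℕ ↦ ((n : 𝕜) - c) ^ 2 * ((1 - r) * r ^ n))
      (r * (1 + r) / (1 - r) ^ 2 - 2 * c * r / (1 - r) + c ^ 2) := by
  have hr1 : 1 - r ≠ 0 := sub_ne_zero.2 fun h ↦ by simp [← h] at hr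
  have hsum := (((hasSum_sq_mul_geometric_of_norm_lt_one hr).sub
    ((hasSum_coe_mul_geometric_of_norm_lt_one hr).mul_left (2 * c))).add
    ((hasSum_geometric_of_norm_lt_one hr).mul_left (c ^ 2))).mul_left (1 - r)
  convert! hsum using 1
  · funext n
    ring
  · field_simp

end GeometricMoments

theorem tgdPmf_eq_mixture (q a : ℝ) (y : ℕ) :
    tgdPmf q a y = (1 - a) * ((1 - q) * q ^ y) + a * ((1 - q ^ 2) * (q ^ 2) ^ y) := by
  rw [tgdPmf, ← pow_mul]
  ring

theorem tgd_variance_general (q a : ℝ) (hq0 : 0 < q) (hq1 : q < 1) :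
    (∑' y : ℕ, ((y : ℝ) - (q * (1 - a) + q ^ 2) / (1 - q ^ 2)) ^ 2 * tgdPmf q a y) =
      q * (1 - a + q * (2 + q * (1 - a) - a ^ 2)) / (1 - q ^ 2) ^ 2 := by
  set μ := (q * (1 - a) + q ^ 2) / (1 - q ^ 2) with hμ
  have hq : ‖q‖ < 1 := by rwa [norm_of_nonneg hq0.le]
  have hq2 : ‖q ^ 2‖ < 1 := by rw [norm_pow]; exact pow_lt_one₀ (norm_nonneg q) hq two_ne_zero
  have hsum := ((hasSum_sq_sub_mul_geometric_pmf hq μ).mul_left (1 - a)).add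
    ((hasSum_sq_sub_mul_geometric_pmf hq2 μ).mul_left a)
  simp_rw [tgdPmf_eq_mixture, mul_add, mul_left_comm _ (1 - a), mul_left_comm _ a]
  rw [hsum.tsum_eq, hμ]
  have h1 : 1 - q ≠ 0 := by linarith
  have h2 : 1 + q ≠ 0 := by linarith
  have h3 : 1 - q ^ 2 ≠ 0 := by nlinarith
  field_simp
  ring

theorem tgd_variance (q a : ℝ) (hq0 : 0 < q) (hq1 : q < 1) (ha0 : 0 < a) (ha1 : a < 1) :
    (∑' y : ℕ, ((y : ℝ) - (q * (1 - a) + q ^ 2) / (1 - q ^ 2)) ^ 2 * tgdPmf q a y) =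
      q * (1 - a + q * (2 + q * (1 - a) - a ^ 2)) / (1 - q ^ 2) ^ 2 :=
  tgd_variance_general q a hq0 hq1
end

section
/- The cdf of PoiTG(λ, q, α) satisfies F(y) = Γ(y+1, λ)/Γ(y+1) - (1-α)W₁(y) - αW₂(y), where W_k(y) = q^{k(y+1)} e^{-λ} ∑_{j=0}^y (λ/q^k)^j / j! for k = 1, 2. -/
/-!
TGD(q, α) is the mixture `(1 - α) Geom(q) + α Geom(q²)`, where `P(G = k) = (1 - r) r ^ k` for
`G ~ Geom(r)`, so the cdf of PoiTG is the same mixture of the cdfs of Poisson(λ) + Geom(r). Writing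
`e_y` for the degree-`y` partial sum of the exponential series, the latter telescopes to
`e^{-λ} e_y(λ) - r^{y+1} e^{-λ} e_y(λ / r)`. Finally the Poisson cdf `e^{-λ} e_y(λ)` is the regularized
upper incomplete gamma function, since `-e^{-t} e_y(t)` is an antiderivative of `t^y e^{-t} / y!`
vanishing at infinity.
-/

open scoped BigOperators
open Real Filter

open Finset MeasureTheory Set Nat

noncomputable def expPartialSum (n : ℕ) (x : ℝ) : ℝ :=
  ∑ j ∈ range (n + 1), x ^ j / j !

theorem expPartialSum_succ (n : ℕ) (x : ℝ) :
    expPartialSum (n + 1) x = expPartialSum n x + x ^ (n + 1) / (n + 1)! :=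
  sum_range_succ _ _

theorem hasDerivAt_expPartialSum (n : ℕ) (t : ℝ) :
    HasDerivAt (expPartialSum n) (expPartialSum n t - t ^ n / n !) t := by
  induction n with
  | zero =>
    rw [show expPartialSum 0 = fun _ ↦ 1 from funext fun x ↦ by simp [expPartialSum]]
    simpa using hasDerivAt_const t (1 : ℝ)
  | succ n ih =>
    rw [show expPartialSum (n + 1) = _ from funext (expPartialSum_succ n)]
    refine (ih.fun_add ((hasDerivAt_pow (n + 1) t).div_const ((n + 1)! : ℝ))).congr_deriv ?_
    rw [factorial_succ]
    push_cast
    field_simp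
    ring

theorem hasDerivAt_neg_exp_neg_mul_expPartialSum (n : ℕ) (t : ℝ) :
    HasDerivAt (fun t ↦ -(exp (-t) * expPartialSum n t)) (t ^ n * exp (-t) / n !) t := by
  have hexp : HasDerivAt (fun t : ℝ ↦ exp (-t)) (-exp (-t)) t := by
    simpa using (hasDerivAt_neg t).exp
  refine (hexp.mul (hasDerivAt_expPartialSum n t)).neg.congr_deriv ?_
  ring

theorem tendsto_exp_neg_mul_expPartialSum_atTop (n : ℕ) :
    Tendsto (fun t ↦ exp (-t) * expPartialSum n t) atTop (nhds 0) := by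
  simp only [expPartialSum, mul_sum]
  convert tendsto_finsetSum (range (n + 1)) fun j _ ↦
    (tendsto_pow_mul_exp_neg_atTop_nhds_zero j).div_const (j ! : ℝ) using 2 with t
  · exact sum_congr rfl fun j _ ↦ by ring
  · simp

theorem integrableOn_Ioi_pow_mul_exp_neg (x : ℝ) (n : ℕ) :
    IntegrableOn (fun t : ℝ ↦ t ^ n * exp (-t)) (Ioi x) :=
  integrable_of_isBigO_exp_neg one_half_pos (by fun_prop) <| by
    simpa [mul_comm, Real.rpow_natCast] using (Real.Gamma_integrand_isLittleO n).isBigO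

theorem integral_Ioi_pow_mul_exp_neg (x : ℝ) (n : ℕ) :
    ∫ t in Ioi x, t ^ n * exp (-t) = n ! * (exp (-x) * expPartialSum n x) := by
  have h := integral_Ioi_of_hasDerivAt_of_tendsto'
    (fun t _ ↦ hasDerivAt_neg_exp_neg_mul_expPartialSum n t)
    ((integrableOn_Ioi_pow_mul_exp_neg x n).div_const _)
    (tendsto_exp_neg_mul_expPartialSum_atTop n).neg
  rw [integral_div, neg_zero, zero_sub, neg_neg, div_eq_iff (by positivity)] at h
  rw [h, mul_comm]

noncomputable def poiGeomPmf (lam r : ℝ) (m : ℕ) : ℝ :=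
  (1 - r) * r ^ m * exp (-lam) * expPartialSum m (lam / r)

theorem sum_range_poiGeomPmf (lam : ℝ) {r : ℝ} (hr : r ≠ 0) (y : ℕ) :
    ∑ m ∈ range (y + 1), poiGeomPmf lam r m =
      exp (-lam) * expPartialSum y lam - r ^ (y + 1) * exp (-lam) * expPartialSum y (lam / r) := by
  induction y with
  | zero => simp [poiGeomPmf, expPartialSum, sub_mul]
  | succ y ih =>
    have hcancel : r ^ (y + 1) * (lam / r) ^ (y + 1) = lam ^ (y + 1) := by
      rw [← mul_pow, mul_div_cancel₀ _ hr]
    rw [sum_range_succ, ih, poiGeomPmf, expPartialSum_succ, expPartialSum_succ]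
    linear_combination exp (-lam) / ((y + 1)! : ℝ) * hcancel

theorem poiTGPmf_eq (lam q a : ℝ) (m : ℕ) :
    poiTGPmf lam q a m = (1 - a) * poiGeomPmf lam q m + a * poiGeomPmf lam (q ^ 2) m := by
  rw [poiTGPmf, poiGeomPmf, poiGeomPmf, expPartialSum, expPartialSum, pow_mul]
  ring

theorem poiTG_cdf_general (lam q a : ℝ) (hq0 : 0 < q) (y : ℕ) :
    (∑ m ∈ Finset.range (y + 1), poiTGPmf lam q a m) =
      (∫ t in Set.Ioi lam, t ^ y * Real.exp (-t)) / (Nat.factorial y : ℝ)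
        - (1 - a) * (q ^ (1 * (y + 1)) * Real.exp (-lam) *
            ∑ j ∈ Finset.range (y + 1), (lam / q ^ 1) ^ j / (Nat.factorial j : ℝ))
        - a * (q ^ (2 * (y + 1)) * Real.exp (-lam) *
            ∑ j ∈ Finset.range (y + 1), (lam / q ^ 2) ^ j / (Nat.factorial j : ℝ)) := by
  have hy : (y ! : ℝ) ≠ 0 := by positivity
  simp only [poiTGPmf_eq, sum_add_distrib, ← mul_sum, sum_range_poiGeomPmf lam hq0.ne',
    sum_range_poiGeomPmf lam (pow_ne_zero 2 hq0.ne'), integral_Ioi_pow_mul_exp_neg,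
    mul_div_cancel_left₀ _ hy, one_mul, pow_one, pow_mul]
  rw [← expPartialSum, ← expPartialSum]
  ring

theorem poiTG_cdf (lam q a : ℝ) (hlam : 0 < lam) (hq0 : 0 < q) (hq1 : q < 1)
    (ha0 : 0 < a) (ha1 : a < 1) (y : ℕ) :
    (∑ m ∈ Finset.range (y + 1), poiTGPmf lam q a m) =
      (∫ t in Set.Ioi lam, t ^ y * Real.exp (-t)) / (Nat.factorial y : ℝ)
        - (1 - a) * (q ^ (1 * (y + 1)) * Real.exp (-lam) *
            ∑ j ∈ Finset.range (y + 1), (lam / q ^ 1) ^ j / (Nat.factorial j : ℝ))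
        - a * (q ^ (2 * (y + 1)) * Real.exp (-lam) *
            ∑ j ∈ Finset.range (y + 1), (lam / q ^ 2) ^ j / (Nat.factorial j : ℝ)) :=
  poiTG_cdf_general lam q a hq0 y
end
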